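/- arXiv:1209.5260 — 4 statements merged into one kernel-verified Lean document; each statement's English description precedes it below -/
import Mathlib

section
/- If at iteration T of the cutting plane algorithm the newly generated constraint d_{T+1} = argmax_{d∈D}(-f(α_T,d)) already belongs to the current constraint set C_T (i.e., C_{T+1} = C_T), then β_T = θ* = φ_T, and (α_T, d_T) is a globally optimal solution pair of the semi-infinite problem min_{α∈A} max_{d∈D} (-f(α,d)). -/
/-!
Write `g α = ⨆ d ∈ D, -f α d` for the worst-case loss. Exactness of the worst-case analysis
says `g α_j = -f α_j d_{j+1}`. Every cut value `max_{i ≤ T} -f α d_i` is at most `g α`, so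
`β_T ≤ g α` on all of `A`. If `d_{T+1} = d_i` with `i ≤ T`, then
`g α_T = -f α_T d_i ≤ β_T`, hence `α_T` minimises `g` on `A`, and all three quantities
collapse to `g α_T = θ*`; `φ_T` is squeezed since each of its terms is some `g α_j ≥ θ*`.
-/

open Set

theorem ContinuousOn.bddAbove_range_of_isCompact_right {X Y γ : Type*} [TopologicalSpace X]
    [TopologicalSpace Y] [LinearOrder γ] [TopologicalSpace γ] [ClosedIciTopology γ] [Nonempty γ]
    {A : Set X} {D : Set Y} {L : X → Y → γ}
    (hL : ContinuousOn (fun p : X × Y => L p.1 p.2) (A ×ˢ D)) (hD : IsCompact D)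
    {a : X} (ha : a ∈ A) : BddAbove (range fun d : D => L a d) := by
  have hsec : ContinuousOn (L a) D :=
    hL.comp (Continuous.prodMk_right a).continuousOn fun _ hd => ⟨ha, hd⟩
  rw [← image_eq_range]
  exact (hD.image_of_continuousOn hsec).bddAbove

theorem Finset.sup'_comp_le_ciSup_subtype {ι Y γ : Type*} [ConditionallyCompleteLattice γ]
    {s : Finset ι} (hs : s.Nonempty) {D : Set Y} {g : Y → γ}
    (hg : BddAbove (Set.range fun d : D => g d)) {d : ι → Y} (hd : ∀ i ∈ s, d i ∈ D) :
    s.sup' hs (fun i => g (d i)) ≤ ⨆ y : D, g y :=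
  Finset.sup'_le _ _ fun i hi => le_ciSup hg ⟨d i, hd i hi⟩

theorem stmt5_general (n m : ℕ) (A : Set (Fin n → ℝ)) (D : Set (Fin m → ℝ))
    (hDc : IsCompact D)
    (f : (Fin n → ℝ) → (Fin m → ℝ) → ℝ)
    (hfcont : ContinuousOn (fun p : (Fin n → ℝ) × (Fin m → ℝ) => f p.1 p.2) (A ×ˢ D))
    (αseq : ℕ → Fin n → ℝ) (dseq : ℕ → Fin m → ℝ)
    (hαmem : ∀ T, αseq T ∈ A) (hdmem : ∀ T, dseq T ∈ D)
    (hαopt : ∀ T, ∀ α ∈ A,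
      (Finset.range (T+1)).sup' Finset.nonempty_range_add_one
          (fun i => -f (αseq T) (dseq i)) ≤
        (Finset.range (T+1)).sup' Finset.nonempty_range_add_one
          (fun i => -f α (dseq i)))
    (hworst : ∀ T, ∀ d ∈ D, -f (αseq T) d ≤ -f (αseq T) (dseq (T+1)))
    (θstar : ℝ) (hθ : θstar = ⨅ α : A, ⨆ d : D, -f α d)
    (β φ : ℕ → ℝ)
    (hβ : ∀ T, β T = (Finset.range (T+1)).sup' Finset.nonempty_range_add_one
      (fun i => -f (αseq T) (dseq i)))
    (hφ : ∀ T, φ T = (Finset.range (T+1)).inf' Finset.nonempty_range_add_one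
      (fun j => -f (αseq j) (dseq (j+1))))
    (T : ℕ)
    (hstop : ∃ i ≤ T, dseq (T+1) = dseq i) :
    β T = θstar ∧ θstar = φ T ∧ (⨆ d : D, -f (αseq T) d) = θstar := by
  set g : (Fin n → ℝ) → ℝ := fun α => ⨆ d : D, -f α d
  have hexact (j : ℕ) : g (αseq j) = -f (αseq j) (dseq (j+1)) :=
    IsMaxOn.iSup_eq (hdmem _) (isMaxOn_iff.mpr (hworst j))
  have hβ_le (α : Fin n → ℝ) (hα : α ∈ A) : β T ≤ g α := by
    rw [hβ]
    exact (hαopt T α hα).trans <| Finset.sup'_comp_le_ciSup_subtype (g := fun d => -f α d) _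
      (hfcont.neg.bddAbove_range_of_isCompact_right (L := fun a d => -f a d) hDc hα)
      fun i _ => hdmem i
  have hg_le_β : g (αseq T) ≤ β T := by
    obtain ⟨i, hiT, hdi⟩ := hstop
    rw [hexact, hdi, hβ]
    exact Finset.le_sup' (fun j => -f (αseq T) (dseq j)) (Finset.mem_range_succ_iff.mpr hiT)
  have hmin : IsMinOn g A (αseq T) := fun α hα => hg_le_β.trans (hβ_le α hα)
  have hθg : θstar = g (αseq T) := hθ.trans (hmin.iInf_eq (hαmem T))
  have hβg : β T = g (αseq T) := le_antisymm (hβ_le _ (hαmem T)) hg_le_β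
  have hφg : φ T = g (αseq T) := by
    rw [hφ]
    refine le_antisymm ?_ (Finset.le_inf' _ _ fun j _ => hexact j ▸ hmin (hαmem j))
    exact hexact T ▸ Finset.inf'_le _ (Finset.self_mem_range_succ T)
  exact ⟨hβg.trans hθg.symm, hθg.trans hφg.symm, hθg.symm⟩

/-- if at iteration T the new worst-case constraint d_{T+1} already
belongs to the current constraint set C_T = {d_0,...,d_T}, then β_T = θ* = φ_T and
(α_T, d_T) is globally optimal for min_{α∈A} max_{d∈D}(-f(α,d)), i.e. α_T attains θ*. -/
theorem stmt5 (n m : ℕ) (A : Set (Fin n → ℝ)) (D : Set (Fin m → ℝ))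
    (hAne : A.Nonempty) (hDne : D.Nonempty)
    (hAc : IsCompact A) (hAconv : Convex ℝ A)
    (hDc : IsCompact D) (hDconv : Convex ℝ D)
    (f : (Fin n → ℝ) → (Fin m → ℝ) → ℝ)
    (hfcont : ContinuousOn (fun p : (Fin n → ℝ) × (Fin m → ℝ) => f p.1 p.2) (A ×ˢ D))
    (αseq : ℕ → Fin n → ℝ) (dseq : ℕ → Fin m → ℝ)
    (hαmem : ∀ T, αseq T ∈ A) (hdmem : ∀ T, dseq T ∈ D)
    (hαopt : ∀ T, ∀ α ∈ A,
      (Finset.range (T+1)).sup' Finset.nonempty_range_add_one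
          (fun i => -f (αseq T) (dseq i)) ≤
        (Finset.range (T+1)).sup' Finset.nonempty_range_add_one
          (fun i => -f α (dseq i)))
    (hworst : ∀ T, ∀ d ∈ D, -f (αseq T) d ≤ -f (αseq T) (dseq (T+1)))
    (θstar : ℝ) (hθ : θstar = ⨅ α : A, ⨆ d : D, -f α d)
    (β φ : ℕ → ℝ)
    (hβ : ∀ T, β T = (Finset.range (T+1)).sup' Finset.nonempty_range_add_one
      (fun i => -f (αseq T) (dseq i)))
    (hφ : ∀ T, φ T = (Finset.range (T+1)).inf' Finset.nonempty_range_add_one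
      (fun j => -f (αseq j) (dseq (j+1))))
    (T : ℕ)
    (hstop : ∃ i ≤ T, dseq (T+1) = dseq i) :
    β T = θstar ∧ θstar = φ T ∧ (⨆ d : D, -f (αseq T) d) = θstar :=
  stmt5_general n m A D hDc f hfcont αseq dseq hαmem hdmem hαopt hworst θstar hθ β φ hβ hφ T hstop
end

section
/- Let Ω(w) = (1/2)(Σ_{t=1}^T ‖w_t‖)² for w = (w_1,...,w_T) with each w_t ∈ ℝ^B. Then the Moreau proximal problem min_w (τ/2)‖w − g‖² + Ω(w) has a unique solution S_τ(g) given blockwise by: S_τ(g)_t = (o_t / ‖g_t‖) g_t if o_t > 0 and 0 otherwise, where u_t = ‖g_t‖, o = soft(u, ς) is the soft-threshold o_t = max(u_t − ς, 0), and ς is a threshold depending on the sorted values of u (computed as ς = (s/(1+ρs))·Σ_{i=1}^ρ u_{(i)} with s = 1/τ and ρ the largest j such that u_{(j)} − (s/(1+js))Σ_{i=1}^j u_{(i)} > 0, where u_{(1)} ≥ ... ≥ u_{(T)}). -/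
/-!
Write `ς` for the threshold and `S = S_τ(g)`. Blockwise, `g_t - S_t = ς v_t` with `v_t` a
subgradient of the norm at `S_t`, so `⟪w_t - S_t, S_t - g_t⟫ + ς (‖w_t‖ - ‖S_t‖) ≥ 0` for all `w_t`.
The threshold is the fixed point `ς = s ∑_t (u_t - ς)₊`, i.e. `∑_t ‖S_t‖ = τ ς`, which makes
`τ (g - S)` a subgradient of `Ω` at `S`. Summing the blockwise inequalities gives the strong
convexity estimate `F S + (τ/2) ‖w - S‖² ≤ F w`, hence both minimality and uniqueness.
-/

open Finset RealInnerProductSpace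

section BlockSoftThreshold

variable {E : Type*} [NormedAddCommGroup E] [InnerProductSpace ℝ E]

noncomputable def blockSoftThreshold (c : ℝ) (x : E) : E :=
  (max (‖x‖ - c) 0 / ‖x‖) • x

theorem norm_blockSoftThreshold {c : ℝ} (hc : 0 ≤ c) (x : E) :
    ‖blockSoftThreshold c x‖ = max (‖x‖ - c) 0 := by
  rcases eq_or_ne x 0 with rfl | hx
  · simp [blockSoftThreshold, hc]
  · rw [blockSoftThreshold, norm_smul, Real.norm_eq_abs, abs_of_nonneg (by positivity),
      div_mul_cancel₀ _ (norm_ne_zero_iff.mpr hx)]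

/-- `hv` and `hyv` say that `v` is a subgradient of the norm at `y`; the conclusion is the
variational inequality characterising `y = prox_{c‖·‖}(x)`. -/
theorem inner_sub_add_mul_norm_sub_nonneg_of_subgradient {x y v : E} {c : ℝ} (hc : 0 ≤ c)
    (hxy : x - y = c • v) (hv : ‖v‖ ≤ 1) (hyv : ⟪y, v⟫ = ‖y‖) (w : E) :
    0 ≤ ⟪w - y, y - x⟫ + c * (‖w‖ - ‖y‖) := by
  have hwv : ⟪w, v⟫ ≤ ‖w‖ :=
    (real_inner_le_norm w v).trans (mul_le_of_le_one_right (norm_nonneg w) hv)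
  have hinner : ⟪w - y, y - x⟫ = c * (‖y‖ - ⟪w, v⟫) := by
    rw [← neg_sub x y, hxy, inner_neg_right, real_inner_smul_right, inner_sub_left, hyv]
    ring
  rw [hinner, ← mul_add]
  exact mul_nonneg hc (by linarith)

theorem inner_sub_blockSoftThreshold_add_nonneg {c : ℝ} (hc : 0 ≤ c) (x w : E) :
    0 ≤ ⟪w - blockSoftThreshold c x, blockSoftThreshold c x - x⟫
      + c * (‖w‖ - ‖blockSoftThreshold c x‖) := by
  rcases le_or_gt ‖x‖ c with hxc | hcx
  · have hzero : blockSoftThreshold c x = 0 := by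
      simp [blockSoftThreshold, max_eq_right (sub_nonpos.mpr hxc)]
    have hwx : ⟪w, x⟫ ≤ ‖w‖ * c :=
      (real_inner_le_norm w x).trans (mul_le_mul_of_nonneg_left hxc (norm_nonneg w))
    rw [hzero, sub_zero, zero_sub, inner_neg_right, norm_zero, sub_zero]
    linarith
  · have hx : 0 < ‖x‖ := hc.trans_lt hcx
    have hcoef : max (‖x‖ - c) 0 = ‖x‖ - c := max_eq_left (by linarith)
    refine inner_sub_add_mul_norm_sub_nonneg_of_subgradient hc (v := ‖x‖⁻¹ • x) ?_ ?_ ?_ w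
    · have hcoef' : 1 - (‖x‖ - c) / ‖x‖ = c * ‖x‖⁻¹ := by field_simp; ring
      rw [blockSoftThreshold, hcoef, smul_smul, ← hcoef', sub_smul, one_smul]
    · rw [norm_smul, norm_inv, norm_norm, inv_mul_cancel₀ hx.ne']
    · rw [norm_blockSoftThreshold hc, hcoef, blockSoftThreshold, hcoef, real_inner_smul_left,
        real_inner_smul_right, real_inner_self_eq_norm_sq]
      field_simp

end BlockSoftThreshold

section MoreauObjective

variable {ι E : Type*} [Fintype ι] [NormedAddCommGroup E] [InnerProductSpace ℝ E]

noncomputable def moreauObjective (τ : ℝ) (g w : ι → E) : ℝ :=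
  τ / 2 * ∑ t, ‖w t - g t‖ ^ 2 + 1 / 2 * (∑ t, ‖w t‖) ^ 2

variable {τ ς : ℝ} {g S : ι → E}

theorem moreauObjective_add_le (hτ : 0 ≤ τ)
    (hS : ∀ t w, 0 ≤ ⟪w - S t, S t - g t⟫ + ς * (‖w‖ - ‖S t‖))
    (hsum : ∑ t, ‖S t‖ = τ * ς) (w : ι → E) :
    moreauObjective τ g S + τ / 2 * ∑ t, ‖w t - S t‖ ^ 2 ≤ moreauObjective τ g w := by
  have hexpand : ∀ t, ‖w t - g t‖ ^ 2
      = ‖S t - g t‖ ^ 2 + ‖w t - S t‖ ^ 2 + 2 * ⟪w t - S t, S t - g t⟫ := fun t => by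
    rw [← sub_add_sub_cancel (w t) (S t) (g t), norm_add_sq_real]
    ring
  have hinner : -(ς * (∑ t, ‖w t‖ - τ * ς)) ≤ ∑ t, ⟪w t - S t, S t - g t⟫ := by
    have := sum_nonneg fun t (_ : t ∈ univ) => hS t (w t)
    rw [sum_add_distrib, ← mul_sum, sum_sub_distrib, hsum] at this
    linarith
  unfold moreauObjective
  rw [sum_congr rfl fun t _ => hexpand t, sum_add_distrib, sum_add_distrib, ← mul_sum, hsum]
  nlinarith [mul_le_mul_of_nonneg_left hinner hτ, sq_nonneg (∑ t, ‖w t‖ - τ * ς)]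

theorem eq_of_moreauObjective_le (hτ : 0 < τ)
    (hS : ∀ t w, 0 ≤ ⟪w - S t, S t - g t⟫ + ς * (‖w‖ - ‖S t‖))
    (hsum : ∑ t, ‖S t‖ = τ * ς) {w : ι → E}
    (hw : moreauObjective τ g w ≤ moreauObjective τ g S) :
    w = S := by
  have hdist : τ / 2 * ∑ t, ‖w t - S t‖ ^ 2 ≤ 0 := by
    linarith [moreauObjective_add_le hτ.le hS hsum w]
  have hzero := (sum_eq_zero_iff_of_nonneg fun t _ => sq_nonneg ‖w t - S t‖).mp
    (le_antisymm (nonpos_of_mul_nonpos_right hdist (by positivity)) (by positivity))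
  funext t
  simpa [sub_eq_zero] using hzero t (mem_univ t)

end MoreauObjective

section SortedThreshold

variable {T : ℕ} {u : Fin T → ℝ} {σ : Equiv.Perm (Fin T)} {s : ℝ} {ρ : Fin T}

/-- With `u ∘ σ` sorted decreasingly, this is the paper's candidate threshold
`s / (1 + j s) · ∑_{i ≤ j} u_(i)` for the one-based index `j + 1`. -/
noncomputable def sortedThreshold (u : Fin T → ℝ) (σ : Equiv.Perm (Fin T)) (s : ℝ)
    (j : Fin T) : ℝ :=
  s / (1 + ((j : ℕ) + 1) * s) * ∑ i ∈ Iic j, u (σ i)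

theorem sortedThreshold_mul (hs : 0 ≤ s) (j : Fin T) :
    sortedThreshold u σ s j * (1 + ((j : ℕ) + 1) * s) = s * ∑ i ∈ Iic j, u (σ i) := by
  have : 0 < 1 + ((j : ℕ) + 1) * s := by positivity
  rw [sortedThreshold]
  field_simp

theorem le_sortedThreshold_of_lt (hs : 0 ≤ s) (hσ : Antitone (u ∘ σ))
    (hρmax : ∀ j, sortedThreshold u σ s j < u (σ j) → j ≤ ρ) {j : Fin T} (hj : ρ < j) :
    u (σ j) ≤ sortedThreshold u σ s ρ := by
  -- `k = ρ + 1` fails the test by maximality of `ρ`, which unwinds to `u_(k) ≤ ς_ρ`.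
  set k : Fin T := ⟨ρ + 1, by omega⟩
  have hIic : Iic k = insert k (Iic ρ) := by
    ext i
    simp only [mem_Iic, mem_insert, Fin.le_def, Fin.ext_iff, k]
    omega
  have hk : u (σ k) * (1 + ((ρ : ℕ) + 1) * s) ≤ s * ∑ i ∈ Iic ρ, u (σ i) := by
    have hkmul := sortedThreshold_mul (u := u) (σ := σ) hs k
    have hnot : u (σ k) ≤ sortedThreshold u σ s k :=
      not_lt.mp fun h => absurd (hρmax k h) (by simp [Fin.le_def, k])
    rw [hIic, sum_insert (by simp [Fin.le_def, k])] at hkmul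
    simp only [k] at hkmul
    push_cast at hkmul
    have hden : (0 : ℝ) ≤ 1 + ((ρ : ℕ) + 1 + 1) * s := by positivity
    nlinarith [mul_le_mul_of_nonneg_right hnot hden]
  have hρk : u (σ k) ≤ sortedThreshold u σ s ρ := by
    rw [← sortedThreshold_mul hs ρ] at hk
    exact le_of_mul_le_mul_right hk (by positivity)
  exact (hσ (show k ≤ j by simp [Fin.le_def, k]; omega)).trans hρk

theorem mul_sum_max_sub_sortedThreshold (hs : 0 ≤ s) (hσ : Antitone (u ∘ σ))
    (hρ : sortedThreshold u σ s ρ < u (σ ρ))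
    (hρmax : ∀ j, sortedThreshold u σ s j < u (σ j) → j ≤ ρ) :
    s * ∑ t, max (u t - sortedThreshold u σ s ρ) 0 = sortedThreshold u σ s ρ := by
  set ς := sortedThreshold u σ s ρ
  have hsupp : ∑ t, max (u t - ς) 0 = ∑ j ∈ Iic ρ, (u (σ j) - ς) := by
    rw [← Equiv.sum_comp σ, ← sum_subset (subset_univ (Iic ρ))]
    · refine sum_congr rfl fun j hj => max_eq_left ?_
      linarith [show u (σ ρ) ≤ u (σ j) from hσ (mem_Iic.mp hj)]
    · intro j _ hj
      have hρj : ρ < j := by simpa using hj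
      exact max_eq_right (sub_nonpos.mpr (le_sortedThreshold_of_lt hs hσ hρmax hρj))
  rw [hsupp, sum_sub_distrib, sum_const, Fin.card_Iic, nsmul_eq_mul, mul_sub,
    ← sortedThreshold_mul hs ρ]
  push_cast
  ring

end SortedThreshold

theorem stmt8_general (T B : ℕ) (τ : ℝ) (hτ : 0 < τ)
    (g : Fin T → EuclideanSpace ℝ (Fin B))
    (s : ℝ) (hs : s = 1/τ)
    (u : Fin T → ℝ) (hu : ∀ t, u t = ‖g t‖)
    (σ : Equiv.Perm (Fin T)) (hσ : ∀ a b : Fin T, a ≤ b → u (σ b) ≤ u (σ a))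
    (ρ : Fin T)
    (hρ : u (σ ρ) - (s/(1 + ((ρ : ℕ) + 1) * s)) * ∑ i ∈ Finset.Iic ρ, u (σ i) > 0)
    (hρmax : ∀ j : Fin T,
      u (σ j) - (s/(1 + ((j : ℕ) + 1) * s)) * ∑ i ∈ Finset.Iic j, u (σ i) > 0 →
      j ≤ ρ)
    (ς : ℝ) (hς : ς = (s/(1 + ((ρ : ℕ) + 1) * s)) * ∑ i ∈ Finset.Iic ρ, u (σ i))
    (o : Fin T → ℝ) (ho : ∀ t, o t = max (u t - ς) 0)
    (Sg : Fin T → EuclideanSpace ℝ (Fin B))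
    (hSg : ∀ t, Sg t = if 0 < o t then (o t / ‖g t‖) • g t else 0)
    (F : (Fin T → EuclideanSpace ℝ (Fin B)) → ℝ)
    (hF : ∀ w, F w = (τ/2) * (∑ t, ‖w t - g t‖^2) + (1/2) * (∑ t, ‖w t‖)^2) :
    (∀ w, F Sg ≤ F w) ∧ (∀ w, (∀ w', F w ≤ F w') → w = Sg) := by
  have hfix : s * ∑ t, o t = ς := by
    simp only [ho, hς]
    exact mul_sum_max_sub_sortedThreshold (by rw [hs]; positivity) hσ (sub_pos.mp hρ)
      fun j hj => hρmax j (sub_pos.mpr hj)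
  have ho0 : ∀ t, 0 ≤ o t := fun t => ho t ▸ le_max_right _ _
  have hς0 : 0 ≤ ς := hfix ▸ mul_nonneg (by rw [hs]; positivity) (sum_nonneg fun t _ => ho0 t)
  obtain rfl : Sg = fun t => blockSoftThreshold ς (g t) := funext fun t => by
    rw [hSg, blockSoftThreshold, ← hu, ← ho]
    split_ifs with hot
    · rfl
    · rw [le_antisymm (not_lt.mp hot) (ho0 t), zero_div, zero_smul]
  obtain rfl : F = moreauObjective τ g := funext hF
  have hsum : ∑ t, ‖blockSoftThreshold ς (g t)‖ = τ * ς := by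
    simp only [norm_blockSoftThreshold hς0, ← hu, ← ho]
    rw [← hfix, hs, ← mul_assoc, mul_one_div_cancel hτ.ne', one_mul]
  have hblock := fun t => inner_sub_blockSoftThreshold_add_nonneg hς0 (g t)
  exact ⟨fun w => (le_add_of_nonneg_right (by positivity)).trans
      (moreauObjective_add_le hτ.le hblock hsum w),
    fun w hw => eq_of_moreauObjective_le hτ hblock hsum (hw _)⟩

/-- the Moreau proximal problem min_w (τ/2)‖w−g‖² + (1/2)(Σ_t ‖w_t‖)²
has a unique solution given blockwise by S_τ(g)_t = (o_t/‖g_t‖)·g_t if o_t > 0 and 0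
otherwise, where u_t = ‖g_t‖, o_t = max(u_t − ς, 0), and
ς = (s/(1+ρs))·Σ_{i=1}^ρ u_(i) with s = 1/τ and ρ the largest j such that
u_(j) − (s/(1+js))·Σ_{i=1}^j u_(i) > 0 (u sorted decreasingly via σ). -/
theorem stmt8 (T B : ℕ) (hT : 0 < T) (hB : 0 < B) (τ : ℝ) (hτ : 0 < τ)
    (g : Fin T → EuclideanSpace ℝ (Fin B))
    (s : ℝ) (hs : s = 1/τ)
    (u : Fin T → ℝ) (hu : ∀ t, u t = ‖g t‖)
    (σ : Equiv.Perm (Fin T)) (hσ : ∀ a b : Fin T, a ≤ b → u (σ b) ≤ u (σ a))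
    (ρ : Fin T)
    (hρ : u (σ ρ) - (s/(1 + ((ρ : ℕ) + 1) * s)) * ∑ i ∈ Finset.Iic ρ, u (σ i) > 0)
    (hρmax : ∀ j : Fin T,
      u (σ j) - (s/(1 + ((j : ℕ) + 1) * s)) * ∑ i ∈ Finset.Iic j, u (σ i) > 0 →
      j ≤ ρ)
    (ς : ℝ) (hς : ς = (s/(1 + ((ρ : ℕ) + 1) * s)) * ∑ i ∈ Finset.Iic ρ, u (σ i))
    (o : Fin T → ℝ) (ho : ∀ t, o t = max (u t - ς) 0)
    (Sg : Fin T → EuclideanSpace ℝ (Fin B))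
    (hSg : ∀ t, Sg t = if 0 < o t then (o t / ‖g t‖) • g t else 0)
    (F : (Fin T → EuclideanSpace ℝ (Fin B)) → ℝ)
    (hF : ∀ w, F w = (τ/2) * (∑ t, ‖w t - g t‖^2) + (1/2) * (∑ t, ‖w t‖)^2) :
    (∀ w, F Sg ≤ F w) ∧ (∀ w, (∀ w', F w ≤ F w') → w = Sg) :=
  stmt8_general T B τ hτ g s hs u hu σ hσ ρ hρ hρmax ς hς o ho Sg hSg F hF
end

section
/- Each block of the Moreau projection of Ω(w) = (1/2)(Σ_t ‖w_t‖)² is a nonnegative scalar multiple of the corresponding block of the input: for the unique minimizer w* of (τ/2)‖w − g‖² + Ω(w), for every t there exists c_t ≥ 0 such that w*_t = c_t g_t (in particular w*_t is either 0 or parallel to g_t). -/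
/-!
Replacing only the block `w t` by any `v` with `‖v‖ ≤ ‖w t‖` does not increase
`(∑ s, ‖w s‖)²`, so at the minimizer `w t` is a point of the ball of radius `‖w t‖` closest
to `g t`. The rescaled vector `(‖w t‖ / ‖g t‖) • g t` in that ball is at distance
`|‖w t‖ - ‖g t‖|` from `g t`, the smallest possible value, so `‖w t - g t‖` attains it too;
in a strictly convex space this forces `w t` onto the ray through `g t`.
-/

open Finset Metric

theorem exists_nonneg_eq_smul_of_isMinOn_closedBall {E : Type*} [NormedAddCommGroup E]
    [NormedSpace ℝ E] [StrictConvexSpace ℝ E] {w g : E}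
    (hmin : IsMinOn (‖· - g‖) (closedBall 0 ‖w‖) w) : ∃ c : ℝ, 0 ≤ c ∧ w = c • g := by
  rcases eq_or_ne g 0 with rfl | hg
  · have hw : ‖w‖ ≤ 0 := by simpa using hmin (mem_closedBall_self (norm_nonneg w))
    exact ⟨0, le_rfl, by simpa using hw⟩
  set v := (‖w‖ / ‖g‖) • g
  have hv : ‖v‖ = ‖w‖ := by
    rw [norm_smul, Real.norm_of_nonneg (by positivity), div_mul_cancel₀ _ (norm_ne_zero_iff.2 hg)]
  have hvg : ‖v - g‖ = |‖w‖ - ‖g‖| := by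
    rw [(SameRay.sameRay_nonneg_smul_left g (by positivity)).norm_sub, hv]
  have hw : ‖w - g‖ = |‖w‖ - ‖g‖| :=
    le_antisymm (hvg ▸ hmin (mem_closedBall_zero_iff.2 hv.le)) (abs_norm_sub_norm_le w g)
  exact (sameRay_iff_norm_sub.2 hw).exists_nonneg_right hg

theorem sum_apply_update {ι α M : Type*} [Fintype ι] [DecidableEq ι] [AddCommMonoid M]
    (f : ι → α → M) (w : ι → α) (t : ι) (v : α) :
    ∑ s, f s (Function.update w t v s) = f t v + ∑ s ∈ univ \ {t}, f s (w s) := by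
  simp_rw [Function.apply_update f]
  exact sum_update_of_mem (mem_univ t) _ _

section

variable {ι E : Type*} [Fintype ι] [NormedAddCommGroup E]

noncomputable def proxObjective (τ : ℝ) (g w : ι → E) : ℝ :=
  (τ / 2) * ∑ t, ‖w t - g t‖ ^ 2 + (1 / 2) * (∑ t, ‖w t‖) ^ 2

theorem proxObjective_update [DecidableEq ι] (τ : ℝ) (g w : ι → E) (t : ι) (v : E) :
    proxObjective τ g (Function.update w t v) =
      (τ / 2) * (‖v - g t‖ ^ 2 + ∑ s ∈ univ \ {t}, ‖w s - g s‖ ^ 2) +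
        (1 / 2) * (‖v‖ + ∑ s ∈ univ \ {t}, ‖w s‖) ^ 2 := by
  unfold proxObjective
  rw [sum_apply_update (fun s x => ‖x - g s‖ ^ 2), sum_apply_update (fun _ x => ‖x‖)]

theorem isMinOn_norm_sub_closedBall_of_proxObjective_le {τ : ℝ} (hτ : 0 < τ) {g w : ι → E}
    (hmin : ∀ w', proxObjective τ g w ≤ proxObjective τ g w') (t : ι) :
    IsMinOn (‖· - g t‖) (closedBall 0 ‖w t‖) (w t) := by
  classical
  intro v hv
  have hv : ‖v‖ ≤ ‖w t‖ := mem_closedBall_zero_iff.1 hv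
  have hw := proxObjective_update τ g w t (w t)
  rw [Function.update_eq_self] at hw
  have h := hmin (Function.update w t v)
  rw [hw, proxObjective_update] at h
  have hN : 0 ≤ ∑ s ∈ univ \ {t}, ‖w s‖ := sum_nonneg fun s _ => norm_nonneg (w s)
  have hsq : ‖w t - g t‖ ^ 2 ≤ ‖v - g t‖ ^ 2 := by nlinarith [norm_nonneg v]
  exact (pow_le_pow_iff_left₀ (norm_nonneg _) (norm_nonneg _) two_ne_zero).1 hsq

end

/-- each block of the Moreau projection of Ω(w) = (1/2)(Σ_t ‖w_t‖)²
is a nonnegative multiple of the corresponding block of the input: if w* minimizes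
(τ/2)‖w − g‖² + Ω(w), then for every t there is c_t ≥ 0 with w*_t = c_t • g_t. -/
theorem stmt9 (T B : ℕ) (τ : ℝ) (hτ : 0 < τ)
    (g wstar : Fin T → EuclideanSpace ℝ (Fin B))
    (F : (Fin T → EuclideanSpace ℝ (Fin B)) → ℝ)
    (hF : ∀ w, F w = (τ/2) * (∑ t, ‖w t - g t‖^2) + (1/2) * (∑ t, ‖w t‖)^2)
    (hmin : ∀ w, F wstar ≤ F w) :
    ∀ t, ∃ c : ℝ, 0 ≤ c ∧ wstar t = c • g t := by
  obtain rfl : F = proxObjective τ g := funext hF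
  exact fun t => exists_nonneg_eq_smul_of_isMinOn_closedBall
    (isMinOn_norm_sub_closedBall_of_proxObjective_le hτ hmin t)
end

section
/- For the soft-threshold operator defined in the Moreau projection algorithm — given sorted u_{(1)} ≥ ... ≥ u_{(T)} ≥ 0, s > 0, ρ = max{j : u_{(j)} − (s/(1+js))Σ_{i=1}^j u_{(i)} > 0}, and ς = (s/(1+ρs))Σ_{i=1}^ρ u_{(i)} — it holds that u_{(j)} > ς exactly for j ≤ ρ, i.e., the threshold ς separates the top ρ sorted values from the rest: u_{(ρ)} > ς ≥ u_{(ρ+1)} (with the convention u_{(T+1)} = 0). -/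
/-!
Since `u` is antitone, `j ≤ ρ` gives `u j ≥ u ρ > ς`. Conversely it suffices to show
`u (ρ + 1) ≤ ς`: adding `u (ρ + 1)` to the partial sum and `s` to the denominator turns the
selection criterion at `ρ + 1` into exactly the inequality `u (ρ + 1) > ς`, which the
maximality of `ρ` therefore rules out.
-/

open Finset

lemma sub_div_mul_add_pos_iff {s d S x : ℝ} (hd : 0 < d) (hds : 0 < d + s) :
    0 < x - s / (d + s) * (S + x) ↔ s / d * S < x := by
  rw [sub_pos, div_mul_eq_mul_div, div_lt_iff₀ hds, div_mul_eq_mul_div, div_lt_iff₀ hd]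
  constructor <;> intro h <;> linarith

lemma Fin.sum_Iic_of_val_eq_add_one {M : Type*} [AddCommMonoid M] {n : ℕ} {a b : Fin n}
    (hab : (b : ℕ) = a + 1) (f : Fin n → M) :
    ∑ i ∈ Iic b, f i = ∑ i ∈ Iic a, f i + f b := by
  have hIio : Iio b = Iic a := by
    ext i
    simp only [mem_Iio, mem_Iic, Fin.lt_def, Fin.le_def]
    omega
  rw [Iic_eq_cons_Iio, Finset.sum_cons, hIio, add_comm]

lemma soft_threshold_gap_succ_pos_iff {n : ℕ} {s : ℝ} (hs : 0 < s) (u : Fin n → ℝ)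
    {a b : Fin n} (hab : (b : ℕ) = a + 1) :
    0 < u b - s / (1 + ((b : ℕ) + 1) * s) * ∑ i ∈ Iic b, u i ↔
      s / (1 + ((a : ℕ) + 1) * s) * ∑ i ∈ Iic a, u i < u b := by
  have hd : 0 < 1 + ((a : ℕ) + 1) * s := by positivity
  rw [Fin.sum_Iic_of_val_eq_add_one hab, ← sub_div_mul_add_pos_iff hd (by positivity), hab]
  push_cast
  ring_nf

theorem stmt17_general (T : ℕ) (s : ℝ) (hs : 0 < s)
    (u : Fin T → ℝ)
    (hsort : ∀ a b : Fin T, a ≤ b → u b ≤ u a)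
    (ρ : Fin T)
    (hρ : u ρ - (s / (1 + ((ρ : ℕ) + 1) * s)) * ∑ i ∈ Finset.Iic ρ, u i > 0)
    (hρmax : ∀ j : Fin T,
      u j - (s / (1 + ((j : ℕ) + 1) * s)) * ∑ i ∈ Finset.Iic j, u i > 0 → j ≤ ρ)
    (ς : ℝ)
    (hς : ς = (s / (1 + ((ρ : ℕ) + 1) * s)) * ∑ i ∈ Finset.Iic ρ, u i) :
    ∀ j : Fin T, u j > ς ↔ j ≤ ρ := by
  subst hς
  intro j
  constructor
  · intro hj
    by_contra! hρj
    let k : Fin T := ⟨ρ + 1, by omega⟩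
    have hkj : k ≤ j := Fin.le_def.2 (Nat.succ_le_of_lt hρj)
    have hρk : ρ < k := Fin.lt_def.2 (Nat.lt_succ_self _)
    exact hρk.not_ge <| hρmax k <|
      (soft_threshold_gap_succ_pos_iff hs u rfl).2 (hj.trans_le (hsort k j hkj))
  · intro hjρ
    exact (sub_pos.1 hρ).trans_le (hsort j ρ hjρ)

/-- for the soft-threshold of the Moreau projection algorithm — with
u_(1) ≥ ... ≥ u_(T) ≥ 0 (here u : Fin T → ℝ listed in decreasing order, 0-based),
s > 0, ρ = max{j : u_(j) − (s/(1+js))·Σ_{i=1}^j u_(i) > 0}, and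
ς = (s/(1+ρs))·Σ_{i=1}^ρ u_(i) — the threshold separates the top ρ values:
u_(j) > ς if and only if j ≤ ρ. -/
theorem stmt17 (T : ℕ) (hT : 0 < T) (s : ℝ) (hs : 0 < s)
    (u : Fin T → ℝ) (hunn : ∀ j, 0 ≤ u j)
    (hsort : ∀ a b : Fin T, a ≤ b → u b ≤ u a)
    (ρ : Fin T)
    (hρ : u ρ - (s / (1 + ((ρ : ℕ) + 1) * s)) * ∑ i ∈ Finset.Iic ρ, u i > 0)
    (hρmax : ∀ j : Fin T,
      u j - (s / (1 + ((j : ℕ) + 1) * s)) * ∑ i ∈ Finset.Iic j, u i > 0 → j ≤ ρ)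
    (ς : ℝ)
    (hς : ς = (s / (1 + ((ρ : ℕ) + 1) * s)) * ∑ i ∈ Finset.Iic ρ, u i) :
    ∀ j : Fin T, u j > ς ↔ j ≤ ρ :=
  stmt17_general T s hs u hsort ρ hρ hρmax ς hς
end
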